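/- arXiv:0903.3388 — 6 statements merged into one kernel-verified Lean document; each statement's English description precedes it below -/
import Mathlib

section
/- Let $X$ be a topological space, $\{\A_x\}_{x\in X}$ a family of Banach spaces with total space $\A$ and projection $p$, and $\Gamma$ a set of local sections with open domains such that (i) every element of $\A$ is a value of some section in $\Gamma$, and (ii) for every finite linear combination $\xi$ of sections in $\Gamma$ and every $\alpha>0$ the set $\{x\in\mathrm{dom}(\xi): \|\xi(x)\|<\alpha\}$ is open. Then the sets $\Omega(U,\xi,\varepsilon)=\{v\in\A: p(v)\in U,\ \|v-\xi(p(v))\|<\varepsilon\}$, for $\xi\in\Gamma$, $U\subseteq\mathrm{dom}(\xi)$ open, $\varepsilon>0$, form a basis for a topology on $\A$. -/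
open Topology TopologicalSpace

/-- A local section of the disjoint union of the Banach spaces `E x` over an open set
`dom ⊆ X`; its values off `dom` are irrelevant. -/
structure LocalSection (X : Type*) [TopologicalSpace X] (E : X → Type*)
    [∀ x, NormedAddCommGroup (E x)] where
  dom : Set X
  isOpen_dom : IsOpen dom
  val : ∀ x, E x

variable {X : Type*} [TopologicalSpace X] {E : X → Type*}
  [∀ x, NormedAddCommGroup (E x)] [∀ x, NormedSpace ℂ (E x)] [∀ x, CompleteSpace (E x)]

/-- The basic set `Ω(U, ξ, ε) = {v : p v ∈ U, ‖v - ξ(p v)‖ < ε}`. -/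
def Omega (ξ : LocalSection X E) (U : Set X) (ε : ℝ) : Set (Σ x, E x) :=
  {v | v.1 ∈ U ∧ ‖v.2 - ξ.val v.1‖ < ε}

/-- The collection of all sets `Ω(U, ξ, ε)` with `ξ ∈ Γ`, `U ⊆ dom ξ` open, `ε > 0`. -/
def basisSets (Γ : Set (LocalSection X E)) : Set (Set (Σ x, E x)) :=
  {O | ∃ ξ ∈ Γ, ∃ U : Set X, IsOpen U ∧ U ⊆ ξ.dom ∧ ∃ ε : ℝ, 0 < ε ∧ O = Omega ξ U ε}

/-! Given `v` in two basic sets `Ω(Uᵢ, ξᵢ, εᵢ)`, choose by (i) a section `ξ ∈ Γ` through `v`.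
Applying (ii) to `ξ - ξᵢ` shows that `ξ` stays within `εᵢ - δ` of `ξᵢ` on an open neighbourhood
of `p v`; by the triangle inequality a tube of radius `δ` around `ξ` over that neighbourhood lies
in `Ω(Uᵢ, ξᵢ, εᵢ)`, and the tube over the intersection of the two neighbourhoods lies in both. -/

section

variable {F : X → Type*} [∀ x, NormedAddCommGroup (F x)]

theorem Omega_mono {ξ : LocalSection X F} {U V : Set X} {δ ε : ℝ} (hUV : U ⊆ V) (hδε : δ ≤ ε) :
    Omega ξ U δ ⊆ Omega ξ V ε :=
  fun _ hv => ⟨hUV hv.1, hv.2.trans_le hδε⟩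

theorem mem_Omega_of_val_eq {ξ : LocalSection X F} {U : Set X} {ε : ℝ} {v : Σ x, F x}
    (hvU : v.1 ∈ U) (hξv : ξ.val v.1 = v.2) (hε : 0 < ε) : v ∈ Omega ξ U ε :=
  ⟨hvU, by rwa [hξv, sub_self, norm_zero]⟩

theorem Omega_subset_Omega {ξ η : LocalSection X F} {U V : Set X} {δ ε : ℝ} (hUV : U ⊆ V)
    (hclose : ∀ x ∈ U, ‖ξ.val x - η.val x‖ < ε - δ) : Omega ξ U δ ⊆ Omega η V ε := by
  rintro w ⟨hwU, hw⟩
  refine ⟨hUV hwU, ?_⟩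
  calc ‖w.2 - η.val w.1‖ ≤ ‖w.2 - ξ.val w.1‖ + ‖ξ.val w.1 - η.val w.1‖ :=
        norm_sub_le_norm_sub_add_norm_sub _ _ _
    _ < δ + (ε - δ) := add_lt_add hw (hclose w.1 hwU)
    _ = ε := add_sub_cancel _ _

theorem mem_basisSets {Γ : Set (LocalSection X F)} {ξ : LocalSection X F} {U : Set X} {ε : ℝ}
    (hξ : ξ ∈ Γ) (hU : IsOpen U) (hUξ : U ⊆ ξ.dom) (hε : 0 < ε) : Omega ξ U ε ∈ basisSets Γ :=
  ⟨ξ, hξ, U, hU, hUξ, ε, hε, rfl⟩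

theorem isOpen_setOf_norm_val_sub_lt {𝕜 : Type*} [Ring 𝕜] [∀ x, Module 𝕜 (F x)]
    {Γ : Set (LocalSection X F)}
    (hΓ : ∀ (n : ℕ) (c : Fin n → 𝕜) (ξ : Fin n → LocalSection X F), (∀ i, ξ i ∈ Γ) →
      ∀ α : ℝ, 0 < α → IsOpen {x : X | (∀ i, x ∈ (ξ i).dom) ∧ ‖∑ i, c i • (ξ i).val x‖ < α})
    {ξ η : LocalSection X F} (hξ : ξ ∈ Γ) (hη : η ∈ Γ) {α : ℝ} (hα : 0 < α) :
    IsOpen {x | x ∈ ξ.dom ∧ x ∈ η.dom ∧ ‖ξ.val x - η.val x‖ < α} := by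
  convert hΓ 2 ![1, -1] ![ξ, η] (Fin.forall_fin_two.2 ⟨hξ, hη⟩) α hα using 1
  ext x
  simp [Fin.forall_fin_two, Fin.sum_univ_two, sub_eq_add_neg, and_assoc]

theorem exists_Omega_subset_Omega {ξ η : LocalSection X F} {U : Set X} {ε : ℝ} {v : Σ x, F x}
    (hopen : ∀ α > 0, IsOpen {x | x ∈ ξ.dom ∧ x ∈ η.dom ∧ ‖ξ.val x - η.val x‖ < α})
    (hU : IsOpen U) (hUη : U ⊆ η.dom) (hv : v ∈ Omega η U ε) (hvξ : v.1 ∈ ξ.dom)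
    (hξv : ξ.val v.1 = v.2) :
    ∃ W, IsOpen W ∧ v.1 ∈ W ∧ W ⊆ ξ.dom ∧ ∃ δ > 0, Omega ξ W δ ⊆ Omega η U ε := by
  set δ := (ε - ‖v.2 - η.val v.1‖) / 2 with hδ_def
  have hδ : 0 < δ := half_pos (sub_pos.2 hv.2)
  have hvδ : ‖v.2 - η.val v.1‖ < ε - δ := by linarith [hv.2]
  refine ⟨U ∩ {x | x ∈ ξ.dom ∧ x ∈ η.dom ∧ ‖ξ.val x - η.val x‖ < ε - δ},
    hU.inter (hopen _ ((norm_nonneg _).trans_lt hvδ)), ⟨hv.1, hvξ, hUη hv.1, hξv ▸ hvδ⟩,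
    fun x hx => hx.2.1, δ, hδ, Omega_subset_Omega Set.inter_subset_left fun x hx => hx.2.2.2⟩

end

/-- Given a set `Γ` of local sections with open domains such that
(i) every element of the total space is a value of some section in `Γ`, and
(ii) for every finite linear combination `ξ` of sections of `Γ` and every `α > 0` the set
`{x ∈ dom ξ : ‖ξ x‖ < α}` is open, the sets `Ω(U, ξ, ε)` form a basis for a topology
on the total space. -/
theorem stmt_1 (Γ : Set (LocalSection X E))
    (h1 : ∀ v : Σ x, E x, ∃ ξ ∈ Γ, v.1 ∈ ξ.dom ∧ ξ.val v.1 = v.2)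
    (h2 : ∀ (n : ℕ) (c : Fin n → ℂ) (ξ : Fin n → LocalSection X E),
      (∀ i, ξ i ∈ Γ) → ∀ α : ℝ, 0 < α →
        IsOpen {x : X | (∀ i, x ∈ (ξ i).dom) ∧ ‖∑ i, c i • (ξ i).val x‖ < α}) :
    @TopologicalSpace.IsTopologicalBasis (Σ x, E x)
      (TopologicalSpace.generateFrom (basisSets Γ)) (basisSets Γ) := by
  refine @IsTopologicalBasis.mk _ (generateFrom (basisSets Γ)) _ ?_ ?_ rfl
  · rintro _ ⟨ξ₁, hξ₁, U₁, hU₁, hU₁ξ₁, ε₁, -, rfl⟩ _ ⟨ξ₂, hξ₂, U₂, hU₂, hU₂ξ₂, ε₂, -, rfl⟩ v ⟨hv₁, hv₂⟩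
    obtain ⟨ξ, hξ, hvξ, hξv⟩ := h1 v
    obtain ⟨W₁, hW₁, hvW₁, hW₁ξ, δ₁, hδ₁, hsub₁⟩ := exists_Omega_subset_Omega
      (fun _ => isOpen_setOf_norm_val_sub_lt h2 hξ hξ₁) hU₁ hU₁ξ₁ hv₁ hvξ hξv
    obtain ⟨W₂, hW₂, hvW₂, -, δ₂, hδ₂, hsub₂⟩ := exists_Omega_subset_Omega
      (fun _ => isOpen_setOf_norm_val_sub_lt h2 hξ hξ₂) hU₂ hU₂ξ₂ hv₂ hvξ hξv
    have hδ : 0 < min δ₁ δ₂ := lt_min hδ₁ hδ₂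
    refine ⟨Omega ξ (W₁ ∩ W₂) (min δ₁ δ₂),
      mem_basisSets hξ (hW₁.inter hW₂) (Set.inter_subset_left.trans hW₁ξ) hδ,
      mem_Omega_of_val_eq ⟨hvW₁, hvW₂⟩ hξv hδ, Set.subset_inter ?_ ?_⟩
    · exact (Omega_mono Set.inter_subset_left (min_le_left _ _)).trans hsub₁
    · exact (Omega_mono Set.inter_subset_right (min_le_right _ _)).trans hsub₂
  · refine Set.sUnion_eq_univ_iff.2 fun v => ?_
    obtain ⟨ξ, hξ, hvξ, hξv⟩ := h1 v
    exact ⟨_, mem_basisSets hξ ξ.isOpen_dom subset_rfl one_pos, mem_Omega_of_val_eq hvξ hξv one_pos⟩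
end

section
/- In the topology on $\A$ generated by the sets $\Omega(U,\xi,\varepsilon)$, the norm map $v\mapsto\|v\|$ is upper-semicontinuous; that is, for every $\alpha>0$ the set $\{v\in\A : \|v\|<\alpha\}$ is open. -/
open Topology TopologicalSpace

variable {X : Type*} [TopologicalSpace X] {E : X → Type*}
  [∀ x, NormedAddCommGroup (E x)] [∀ x, NormedSpace ℂ (E x)] [∀ x, CompleteSpace (E x)]

omit [∀ x, NormedSpace ℂ (E x)] [∀ x, CompleteSpace (E x)] in
theorem norm_lt_add_of_mem_Omega {ξ : LocalSection X E} {U : Set X} {β ε : ℝ}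
    (hU : ∀ x ∈ U, ‖ξ.val x‖ < β) {v : Σ x, E x} (hv : v ∈ Omega ξ U ε) : ‖v.2‖ < β + ε :=
  calc ‖v.2‖ ≤ ‖ξ.val v.1‖ + ‖v.2 - ξ.val v.1‖ := norm_le_norm_add_norm_sub' _ _
    _ < β + ε := add_lt_add (hU v.1 hv.1) hv.2

omit [∀ x, NormedSpace ℂ (E x)] [∀ x, CompleteSpace (E x)] in
theorem exists_Omega_subset_norm_lt {ξ : LocalSection X E}
    (hξ : ∀ β > 0, IsOpen {x | x ∈ ξ.dom ∧ ‖ξ.val x‖ < β}) {v : Σ x, E x}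
    (hv : v.1 ∈ ξ.dom) (hvξ : ξ.val v.1 = v.2) {α : ℝ} (hvα : ‖v.2‖ < α) :
    ∃ U, IsOpen U ∧ U ⊆ ξ.dom ∧ ∃ ε > 0,
      v ∈ Omega ξ U ε ∧ Omega ξ U ε ⊆ {w | ‖w.2‖ < α} := by
  set ε := (α - ‖v.2‖) / 2 with hε_def
  have hε : 0 < ε := by linarith
  refine ⟨{x | x ∈ ξ.dom ∧ ‖ξ.val x‖ < ‖v.2‖ + ε}, hξ _ (by positivity), fun x hx => hx.1,
    ε, hε, ⟨⟨hv, by rw [hvξ]; linarith⟩, by simpa [hvξ] using hε⟩, fun w hw => ?_⟩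
  have := norm_lt_add_of_mem_Omega (fun x hx => hx.2) hw
  change ‖w.2‖ < α
  linarith

theorem stmt_3_general (Γ : Set (LocalSection X E))
    (h1 : ∀ v : Σ x, E x, ∃ ξ ∈ Γ, v.1 ∈ ξ.dom ∧ ξ.val v.1 = v.2)
    (h2 : ∀ (n : ℕ) (c : Fin n → ℂ) (ξ : Fin n → LocalSection X E),
      (∀ i, ξ i ∈ Γ) → ∀ α : ℝ, 0 < α →
        IsOpen {x : X | (∀ i, x ∈ (ξ i).dom) ∧ ‖∑ i, c i • (ξ i).val x‖ < α})
    (α : ℝ) :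
    IsOpen[TopologicalSpace.generateFrom (basisSets Γ)]
      {v : Σ x, E x | ‖v.2‖ < α} := by
  have hΓ : ∀ ξ ∈ Γ, ∀ β > 0, IsOpen {x | x ∈ ξ.dom ∧ ‖ξ.val x‖ < β} := fun ξ hξ β hβ => by
    simpa [Fin.forall_fin_one] using h2 1 (fun _ => 1) (fun _ => ξ) (fun _ => hξ) β hβ
  let := TopologicalSpace.generateFrom (basisSets Γ)
  refine isOpen_iff_forall_mem_open.2 fun v hv => ?_
  obtain ⟨ξ, hξΓ, hvdom, hvξ⟩ := h1 v
  obtain ⟨U, hU, hUξ, ε, hε, hvΩ, hΩ⟩ := exists_Omega_subset_norm_lt (hΓ ξ hξΓ) hvdom hvξ hv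
  exact ⟨Omega ξ U ε, hΩ, isOpen_generateFrom_of_mem ⟨ξ, hξΓ, U, hU, hUξ, ε, hε, rfl⟩, hvΩ⟩

/-- In the topology generated by the sets `Ω(U, ξ, ε)`, the norm map
`v ↦ ‖v‖` is upper-semicontinuous: for every `α > 0` the set `{v : ‖v‖ < α}` is open. -/
theorem stmt_3 (Γ : Set (LocalSection X E))
    (h1 : ∀ v : Σ x, E x, ∃ ξ ∈ Γ, v.1 ∈ ξ.dom ∧ ξ.val v.1 = v.2)
    (h2 : ∀ (n : ℕ) (c : Fin n → ℂ) (ξ : Fin n → LocalSection X E),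
      (∀ i, ξ i ∈ Γ) → ∀ α : ℝ, 0 < α →
        IsOpen {x : X | (∀ i, x ∈ (ξ i).dom) ∧ ‖∑ i, c i • (ξ i).val x‖ < α})
    (α : ℝ) (hα : 0 < α) :
    IsOpen[TopologicalSpace.generateFrom (basisSets Γ)]
      {v : Σ x, E x | ‖v.2‖ < α} :=
  stmt_3_general Γ h1 h2 α
end

section
/- The upper-semicontinuous Banach bundle topology on $\A$ constructed from a set $\Gamma$ of local sections is a continuous Banach bundle (i.e., the norm is continuous on the total space) if and only if for every $\xi\in\Gamma$ the map $x\mapsto\|\xi(x)\|$ is continuous on $\mathrm{dom}(\xi)$. -/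
/-! In the topology generated by the sets `Ω(U, η, ε)`, the preimage of `Ω(U, η, ε)` under a
section `ξ ∈ Γ` is `U ∩ {x | ‖ξ x - η x‖ < ε}`, which is open by the hypothesis on linear
combinations; so every `ξ ∈ Γ` is continuous on its domain, and continuity of the norm on the total
space yields continuity of `‖ξ‖`. Conversely, every `v` equals `ξ (p v)` for some `ξ ∈ Γ`; on
`Ω(U, ξ, ε)` the norm is within `ε` of `‖ξ ∘ p‖`, which is continuous at `v` because `‖ξ‖` is
and the projection `p` is. -/

open Topology TopologicalSpace

variable {X : Type*} [TopologicalSpace X] {E : X → Type*}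
  [∀ x, NormedAddCommGroup (E x)] [∀ x, NormedSpace ℂ (E x)] [∀ x, CompleteSpace (E x)]

open Filter

namespace LocalSection

variable {X : Type*} [TopologicalSpace X] {E : X → Type*} [∀ x, NormedAddCommGroup (E x)]
  {Γ : Set (LocalSection X E)}

theorem omega_mem_basisSets {ξ : LocalSection X E} (hξ : ξ ∈ Γ) {U : Set X} (hU : IsOpen U)
    (hUξ : U ⊆ ξ.dom) {ε : ℝ} (hε : 0 < ε) : Omega ξ U ε ∈ basisSets Γ :=
  ⟨ξ, hξ, U, hU, hUξ, ε, hε, rfl⟩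

theorem isOpen_setOf_norm_sub_lt [∀ x, NormedSpace ℂ (E x)]
    (h2 : ∀ (n : ℕ) (c : Fin n → ℂ) (ξ : Fin n → LocalSection X E),
      (∀ i, ξ i ∈ Γ) → ∀ α : ℝ, 0 < α →
        IsOpen {x : X | (∀ i, x ∈ (ξ i).dom) ∧ ‖∑ i, c i • (ξ i).val x‖ < α})
    {ξ η : LocalSection X E} (hξ : ξ ∈ Γ) (hη : η ∈ Γ) {ε : ℝ} (hε : 0 < ε) :
    IsOpen {x : X | (x ∈ ξ.dom ∧ x ∈ η.dom) ∧ ‖ξ.val x - η.val x‖ < ε} := by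
  convert h2 2 ![1, -1] ![ξ, η] (Fin.forall_fin_two.2 ⟨hξ, hη⟩) ε hε using 1
  ext x
  simp [Fin.forall_fin_two, Fin.sum_univ_two, sub_eq_add_neg]

theorem continuous_domRestrict_sigmaMk
    (hΓ : ∀ ξ ∈ Γ, ∀ η ∈ Γ, ∀ ε : ℝ, 0 < ε →
      IsOpen {x : X | (x ∈ ξ.dom ∧ x ∈ η.dom) ∧ ‖ξ.val x - η.val x‖ < ε})
    {ξ : LocalSection X E} (hξ : ξ ∈ Γ) :
    Continuous[_, generateFrom (basisSets Γ)]
      (ξ.dom.domRestrict fun x => (⟨x, ξ.val x⟩ : Σ x, E x)) := by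
  rw [continuous_generateFrom_iff]
  rintro _ ⟨η, hη, U, hU, hUη, ε, hε, rfl⟩
  have hpre : ξ.dom.domRestrict (fun x => (⟨x, ξ.val x⟩ : Σ x, E x)) ⁻¹' Omega η U ε =
      Subtype.val ⁻¹' (U ∩ {x | (x ∈ ξ.dom ∧ x ∈ η.dom) ∧ ‖ξ.val x - η.val x‖ < ε}) := by
    ext ⟨x, hx⟩
    exact ⟨fun ⟨hxU, hlt⟩ => ⟨hxU, ⟨hx, hUη hxU⟩, hlt⟩, fun ⟨hxU, _, hlt⟩ => ⟨hxU, hlt⟩⟩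
  rw [hpre]
  exact (hU.inter (hΓ ξ hξ η hη ε hε)).preimage continuous_subtype_val

variable [TopologicalSpace (Σ x, E x)]

theorem omega_mem_nhds (hΩ : ∀ O ∈ basisSets Γ, IsOpen O)
    {ξ : LocalSection X E} (hξ : ξ ∈ Γ) {v : Σ x, E x} (hv : v.1 ∈ ξ.dom)
    {U : Set X} (hU : U ∈ 𝓝 v.1) {ε : ℝ} (hε : ‖v.2 - ξ.val v.1‖ < ε) : Omega ξ U ε ∈ 𝓝 v := by
  obtain ⟨V, hVU, hV, hvV⟩ := mem_nhds_iff.1 hU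
  have hO := hΩ _ (omega_mem_basisSets hξ (hV.inter ξ.isOpen_dom) Set.inter_subset_right
    ((norm_nonneg _).trans_lt hε))
  exact mem_of_superset (hO.mem_nhds ⟨⟨hvV, hv⟩, hε⟩) fun w ⟨hw, hlt⟩ => ⟨hVU hw.1, hlt⟩

theorem tendsto_fst (hΩ : ∀ O ∈ basisSets Γ, IsOpen O)
    (h1 : ∀ v : Σ x, E x, ∃ ξ ∈ Γ, v.1 ∈ ξ.dom ∧ ξ.val v.1 = v.2)
    (v : Σ x, E x) : Tendsto Sigma.fst (𝓝 v) (𝓝 v.1) := by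
  obtain ⟨ξ, hξ, hv, hval⟩ := h1 v
  exact fun U hU => mem_map.2 <| mem_of_superset
    (omega_mem_nhds hΩ hξ hv hU (ε := 1) (by simp [hval])) fun _ hw => hw.1

theorem tendsto_norm_sub_val_fst (hΩ : ∀ O ∈ basisSets Γ, IsOpen O)
    {ξ : LocalSection X E} (hξ : ξ ∈ Γ) {v : Σ x, E x}
    (hv : v.1 ∈ ξ.dom) (hval : ξ.val v.1 = v.2) :
    Tendsto (fun w : Σ x, E x => ‖w.2 - ξ.val w.1‖) (𝓝 v) (𝓝 0) := by
  refine NormedAddGroup.tendsto_nhds_zero.2 fun ε hε => ?_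
  filter_upwards [omega_mem_nhds hΩ hξ hv univ_mem (ε := ε) (by simpa [hval])]
    with w hw
  simpa using hw.2

theorem continuous_norm_snd (hΩ : ∀ O ∈ basisSets Γ, IsOpen O)
    (h1 : ∀ v : Σ x, E x, ∃ ξ ∈ Γ, v.1 ∈ ξ.dom ∧ ξ.val v.1 = v.2)
    (hΓ : ∀ ξ ∈ Γ, ContinuousOn (fun x => ‖ξ.val x‖) ξ.dom) :
    Continuous fun v : Σ x, E x => ‖v.2‖ := by
  refine continuous_iff_continuousAt.2 fun v => ?_
  obtain ⟨ξ, hξ, hv, hval⟩ := h1 v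
  have hξp : Tendsto (fun w : Σ x, E x => ‖ξ.val w.1‖) (𝓝 v) (𝓝 ‖v.2‖) := by
    rw [← hval]
    exact ((hΓ ξ hξ).continuousAt (ξ.isOpen_dom.mem_nhds hv)).tendsto.comp (tendsto_fst hΩ h1 v)
  refine hξp.congr_dist (squeeze_zero (fun _ => dist_nonneg) (fun w => ?_)
    (tendsto_norm_sub_val_fst hΩ hξ hv hval))
  rw [dist_comm]
  exact dist_norm_norm_le _ _

end LocalSection

/-- The upper-semicontinuous Banach bundle topology constructed from a
set `Γ` of local sections (the topology generated by the sets `Ω(U, ξ, ε)`) is a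
continuous Banach bundle — i.e. the norm is continuous on the total space — if and only
if for every `ξ ∈ Γ` the map `x ↦ ‖ξ x‖` is continuous on `dom ξ`. -/
theorem stmt_4 (Γ : Set (LocalSection X E))
    (h1 : ∀ v : Σ x, E x, ∃ ξ ∈ Γ, v.1 ∈ ξ.dom ∧ ξ.val v.1 = v.2)
    (h2 : ∀ (n : ℕ) (c : Fin n → ℂ) (ξ : Fin n → LocalSection X E),
      (∀ i, ξ i ∈ Γ) → ∀ α : ℝ, 0 < α →
        IsOpen {x : X | (∀ i, x ∈ (ξ i).dom) ∧ ‖∑ i, c i • (ξ i).val x‖ < α}) :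
    (@Continuous (Σ x, E x) ℝ (TopologicalSpace.generateFrom (basisSets Γ)) _
        (fun v => ‖v.2‖)) ↔
      ∀ ξ ∈ Γ, ContinuousOn (fun x => ‖ξ.val x‖) ξ.dom := by
  let _ : TopologicalSpace (Σ x, E x) := generateFrom (basisSets Γ)
  refine ⟨fun hnorm ξ hξ => ?_,
    LocalSection.continuous_norm_snd (fun _ => isOpen_generateFrom_of_mem) h1⟩
  have hsection := LocalSection.continuous_domRestrict_sigmaMk
    (fun _ hξ _ hη _ hε => LocalSection.isOpen_setOf_norm_sub_lt h2 hξ hη hε) hξ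
  exact continuousOn_iff_continuous_domRestrict.2 (hnorm.comp hsection)
end

section
/- A Fell bundle $\A=\{\A_s\}_{s\in S}$ over an inverse semigroup $S$ is semi-abelian (each fiber $\A_e$ over an idempotent $e$ is a commutative C*-algebra) if and only if the cross-sectional C*-algebra $C^*(\E)$ of the restriction $\E$ of $\A$ to the idempotent semilattice $E(S)$ is commutative. -/
/-- An inverse semigroup: a semigroup with an involution `star` such that `s (star s) s = s`,
`(star s) s (star s) = star s`, and idempotents commute (this forces `star s` to be the
unique generalized inverse of `s`). -/
class InverseSemigroup (S : Type*) extends Semigroup S, Star S where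
  mul_star_mul : ∀ s : S, s * star s * s = s
  star_mul_star : ∀ s : S, star s * s * star s = star s
  idem_comm : ∀ e f : S, e * e = e → f * f = f → e * f = f * e

/-- The natural partial order on an inverse semigroup: `s ≤ t` iff `s = t (star s) s`. -/
def ISle {S : Type*} [InverseSemigroup S] (s t : S) : Prop := t * (star s * s) = s

/-- A (concrete) Fell bundle over an inverse semigroup `S`: a family of closed subspaces
`fib s` of a C*-algebra `A`, with `fib s * fib t ⊆ fib (s t)`, `(fib s)* ⊆ fib (star s)`,
and `fib s ⊆ fib t` whenever `s ≤ t`.  (The fibers are thus Banach spaces with a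
bilinear associative multiplication `𝒜ₛ × 𝒜ₜ → 𝒜ₛₜ`, a conjugate-linear involution
`𝒜ₛ → 𝒜ₛ*`, isometric inclusions, and the C*-identities hold in `A`.) -/
structure FellBundle (S : Type*) [InverseSemigroup S] (A : Type*)
    [NormedRing A] [StarRing A] [NormedAlgebra ℂ A] where
  fib : S → Submodule ℂ A
  isClosed_fib : ∀ s, IsClosed (fib s : Set A)
  mul_mem : ∀ {s t : S} {a b : A}, a ∈ fib s → b ∈ fib t → a * b ∈ fib (s * t)
  star_mem : ∀ {s : S} {a : A}, a ∈ fib s → star a ∈ fib (star s)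
  incl : ∀ {s t : S}, ISle s t → fib s ≤ fib t

variable {S : Type*} [InverseSemigroup S]
variable {A : Type*} [NormedRing A] [StarRing A] [CStarRing A]
  [NormedAlgebra ℂ A] [StarModule ℂ A] [CompleteSpace A]

/-- A Fell bundle is semi-abelian if each fiber over an idempotent is commutative. -/
def FellBundle.SemiAbelian (𝓑 : FellBundle S A) : Prop :=
  ∀ e : S, e * e = e → ∀ a b : A, a ∈ 𝓑.fib e → b ∈ 𝓑.fib e → a * b = b * a

/-- A Fell bundle is saturated if `fib (s t)` is the closed linear span of
`fib s * fib t`. -/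
def FellBundle.Saturated (𝓑 : FellBundle S A) : Prop :=
  ∀ s t : S, (𝓑.fib (s * t) : Set A) ⊆
    closure (↑(Submodule.span ℂ {x : A | ∃ a ∈ 𝓑.fib s, ∃ b ∈ 𝓑.fib t, x = a * b}) : Set A)

/-- The "restriction to the idempotent semilattice" part of the bundle: the closed linear
span of the fibers over idempotents, a concrete model for `C*(𝓔)`. -/
def FellBundle.EPart (𝓑 : FellBundle S A) : Set A :=
  closure (↑(Submodule.span ℂ (⋃ e ∈ {e : S | e * e = e}, (𝓑.fib e : Set A))) : Set A)

/-- The open support `𝒰ₑ ⊆ X` of the ideal `𝒜ₑ = C₀(𝒰ₑ)`, expressed via the Gelfand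
transform `val` of the idempotent part. -/
def FellBundle.U (𝓑 : FellBundle S A) {X : Type*} (val : A → X → ℂ) (e : S) : Set X :=
  {x : X | ∃ b ∈ 𝓑.fib e, val b x ≠ 0}


/-!
Idempotents of `S` are self-adjoint, so `e f ≤ e` for idempotents `e, f`, whence
`𝒜ₑ 𝒜_f ⊆ 𝒜_{ef} ⊆ 𝒜ₑ`. If every `𝒜ₑ` is commutative, take `a ∈ 𝒜ₑ`, `b ∈ 𝒜_f` and
`c = a b - b a`: commuting `a*` past `a b` and `a b b*` inside `𝒜ₑ` gives `a b c* = 0`, and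
symmetrically `b a c* = 0`, so `c c* = 0` and `c = 0` by the C*-identity. Thus the fibers over
idempotents commute with each other, hence so does the closed linear span they generate.
-/
namespace InverseSemigroup

theorem star_eq_self_of_mul_self {e : S} (he : e * e = e) : star e = e := by
  set x := star e
  have hxe : x * e * (x * e) = x * e := by
    rw [← mul_assoc, star_mul_star]
  have hex : e * x * (e * x) = e * x := by
    rw [← mul_assoc, mul_star_mul]
  -- Since `x e` and `e x` are commuting idempotents, `x = e x x e` absorbs `e` on both sides.
  have hx : x = e * x * x * e := by
    calc x = x * e * x := (star_mul_star e).symm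
      _ = x * e * (e * x) := by rw [← mul_assoc, mul_assoc x e e, he]
      _ = e * x * (x * e) := idem_comm _ _ hxe hex
      _ = e * x * x * e := by simp only [mul_assoc]
  have hex' : e * x = x := by
    calc e * x = e * (e * x * x * e) := by rw [← hx]
      _ = e * x * x * e := by simp only [← mul_assoc, he]
      _ = x := hx.symm
  have hxe' : x * e = x := by
    calc x * e = e * x * x * e * e := by rw [← hx]
      _ = e * x * x * e := by rw [mul_assoc _ e e, he]
      _ = x := hx.symm
  calc x = x * e := hxe'.symm
    _ = e * x * e := by rw [hex']
    _ = e := mul_star_mul e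

theorem mul_self_mul_mul_self {e f : S} (he : e * e = e) (hf : f * f = f) :
    e * f * (e * f) = e * f := by
  calc e * f * (e * f) = e * (f * e) * f := by simp only [mul_assoc]
    _ = e * (e * f) * f := by rw [idem_comm _ _ hf he]
    _ = e * f := by rw [← mul_assoc, he, mul_assoc, hf]

theorem isLe_mul_right_of_mul_self {e f : S} (he : e * e = e) (hf : f * f = f) :
    ISle (e * f) e := by
  rw [ISle, star_eq_self_of_mul_self (mul_self_mul_mul_self he hf), mul_self_mul_mul_self he hf,
    ← mul_assoc, he]

end InverseSemigroup

open InverseSemigroup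

namespace FellBundle

omit [CStarRing A] [StarModule ℂ A] [CompleteSpace A] in
theorem star_mem_of_mul_self (𝓑 : FellBundle S A) {e : S} (he : e * e = e) {a : A}
    (ha : a ∈ 𝓑.fib e) : star a ∈ 𝓑.fib e := by
  simpa only [star_eq_self_of_mul_self he] using 𝓑.star_mem ha

omit [CStarRing A] [StarModule ℂ A] [CompleteSpace A] in
theorem mul_mem_left_of_mul_self (𝓑 : FellBundle S A) {e f : S} (he : e * e = e)
    (hf : f * f = f) {a b : A} (ha : a ∈ 𝓑.fib e) (hb : b ∈ 𝓑.fib f) : a * b ∈ 𝓑.fib e :=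
  𝓑.incl (isLe_mul_right_of_mul_self he hf) (𝓑.mul_mem ha hb)

omit [CStarRing A] [StarModule ℂ A] [CompleteSpace A] in
theorem mul_mul_star_commutator_eq_zero (𝓑 : FellBundle S A) (h𝓑 : 𝓑.SemiAbelian) {e f : S}
    (he : e * e = e) (hf : f * f = f) {a b : A} (ha : a ∈ 𝓑.fib e) (hb : b ∈ 𝓑.fib f) :
    a * b * star (a * b - b * a) = 0 := by
  have hab : a * b ∈ 𝓑.fib e := 𝓑.mul_mem_left_of_mul_self he hf ha hb
  have ha' : star a ∈ 𝓑.fib e := 𝓑.star_mem_of_mul_self he ha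
  have hb' : star b ∈ 𝓑.fib f := 𝓑.star_mem_of_mul_self hf hb
  have h₁ : a * b * star b * star a = star a * (a * b * star b) :=
    h𝓑 e he _ _ (𝓑.mul_mem_left_of_mul_self he hf hab hb') ha'
  have h₂ : a * b * star a = star a * (a * b) := h𝓑 e he _ _ hab ha'
  calc a * b * star (a * b - b * a) = a * b * star b * star a - a * b * star a * star b := by
        rw [star_sub, star_mul, star_mul, mul_sub]; simp only [mul_assoc]
    _ = 0 := by rw [h₁, h₂]; simp only [mul_assoc, sub_self]

omit [StarModule ℂ A] [CompleteSpace A] in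
theorem mul_comm_of_semiAbelian (𝓑 : FellBundle S A) (h𝓑 : 𝓑.SemiAbelian) {e f : S}
    (he : e * e = e) (hf : f * f = f) {a b : A} (ha : a ∈ 𝓑.fib e) (hb : b ∈ 𝓑.fib f) :
    a * b = b * a := by
  have hba : b * a * star (a * b - b * a) = 0 := by
    rw [← neg_sub, star_neg, mul_neg, 𝓑.mul_mul_star_commutator_eq_zero h𝓑 hf he hb ha, neg_zero]
  have hc : (a * b - b * a) * star (a * b - b * a) = 0 := by
    rw [sub_mul, 𝓑.mul_mul_star_commutator_eq_zero h𝓑 he hf ha hb, hba, sub_zero]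
  exact sub_eq_zero.mp (CStarRing.mul_star_self_eq_zero_iff _ |>.mp hc)

end FellBundle

theorem closure_span_subset_centralizer_centralizer {R B : Type*} [CommSemiring R] [Semiring B]
    [Algebra R B] [TopologicalSpace B] [IsTopologicalSemiring B] [T2Space B] (s : Set B) :
    closure (Submodule.span R s : Set B) ⊆ Set.centralizer (Set.centralizer s) :=
  closure_minimal (fun _ hx => Algebra.adjoin_le_centralizer_centralizer R s
    (Algebra.span_le_adjoin R s hx)) (Set.isClosed_centralizer _)

set_option linter.unusedSectionVars false in
/-- A Fell bundle `𝓑` over an inverse semigroup `S` is semi-abelian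
(each fiber over an idempotent is a commutative C*-algebra) if and only if the
cross-sectional C*-algebra `C*(𝓔)` of the restriction of `𝓑` to the idempotent
semilattice (concretely, the closed linear span of the idempotent fibers) is
commutative. -/
theorem stmt_5 (𝓑 : FellBundle S A) :
    𝓑.SemiAbelian ↔ ∀ a ∈ 𝓑.EPart, ∀ b ∈ 𝓑.EPart, a * b = b * a := by
  constructor
  · intro h𝓑
    have hgen : ∀ a ∈ ⋃ e ∈ {e : S | e * e = e}, (𝓑.fib e : Set A),
        ∀ b ∈ ⋃ e ∈ {e : S | e * e = e}, (𝓑.fib e : Set A), a * b = b * a := by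
      simp only [Set.mem_iUnion, Set.mem_ofPred_eq, SetLike.mem_coe]
      rintro a ⟨e, he, ha⟩ b ⟨f, hf, hb⟩
      exact 𝓑.mul_comm_of_semiAbelian h𝓑 he hf ha hb
    intro a ha b hb
    exact Set.centralizer_centralizer_comm_of_comm hgen a
      (closure_span_subset_centralizer_centralizer _ ha) b
      (closure_span_subset_centralizer_centralizer _ hb)
  · intro hcomm e he a b ha hb
    have hsub : (𝓑.fib e : Set A) ⊆ 𝓑.EPart := fun _ hx =>
      subset_closure (Submodule.subset_span (Set.mem_biUnion (x := e) he hx))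
    exact hcomm a (hsub ha) b (hsub hb)
end

section
/- Let $\A$ be a saturated semi-abelian Fell bundle over an inverse semigroup $S$, with $C^*(\E)\cong C_0(X)$. For each $a\in\A_s$ let $\theta_a\colon\mathrm{dom}(a)\to\mathrm{ran}(a)$ be the homeomorphism determined by $(a^*ba)(x)=(a^*a)(x)\,b(\theta_a(x))$ for $b\in C_0(X)$. If $a_1,a_2\in\A_s$ and $x\in\mathrm{dom}(a_1)\cap\mathrm{dom}(a_2)$, then $\theta_{a_1}(x)=\theta_{a_2}(x)$. -/
variable {S : Type*} [InverseSemigroup S]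
variable {A : Type*} [NormedRing A] [StarRing A] [CStarRing A]
  [NormedAlgebra ℂ A] [StarModule ℂ A] [CompleteSpace A]

namespace InverseSemigroup

theorem isIdempotentElem_mul_star_self (s : S) : IsIdempotentElem (s * star s) := by
  rw [IsIdempotentElem, ← mul_assoc, mul_star_mul]

theorem isIdempotentElem_star_mul_self (s : S) : IsIdempotentElem (star s * s) := by
  rw [IsIdempotentElem, ← mul_assoc, star_mul_star]

theorem isIdempotentElem_mul {e f : S} (he : IsIdempotentElem e) (hf : IsIdempotentElem f) :
    IsIdempotentElem (e * f) :=
  he.mul_of_commute (idem_comm e f he hf) hf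

theorem isIdempotentElem_star_mul_mul (s : S) {e : S} (he : IsIdempotentElem e) :
    IsIdempotentElem (star s * e * s) := by
  have hcomm := idem_comm e (s * star s) he (isIdempotentElem_mul_star_self s)
  calc star s * e * s * (star s * e * s)
      = star s * (e * (s * star s)) * e * s := by simp only [mul_assoc]
    _ = (star s * s * star s) * (e * e) * s := by rw [hcomm]; simp only [mul_assoc]
    _ = star s * e * s := by rw [star_mul_star, he.eq]

theorem star_eq_of_isIdempotentElem {e : S} (he : IsIdempotentElem e) : star e = e := by
  have h_right : e * star e = e :=
    calc e * star e = e * (e * star e) := by rw [← mul_assoc, he.eq]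
      _ = e * star e * e := idem_comm e _ he (isIdempotentElem_mul_star_self e)
      _ = e := mul_star_mul e
  have h_left : star e * e = e :=
    calc star e * e = star e * e * e := by rw [mul_assoc, he.eq]
      _ = e * (star e * e) := idem_comm _ e (isIdempotentElem_star_mul_self e) he
      _ = e := by rw [← mul_assoc, mul_star_mul]
  calc star e = star e * e * star e := (star_mul_star e).symm
    _ = e := by rw [h_left, h_right]

end InverseSemigroup

open InverseSemigroup

namespace FellBundle

variable {X : Type*}

omit [CStarRing A] [StarModule ℂ A] [CompleteSpace A]

structure IsCharacterFamily (𝓑 : FellBundle S A) (val : A → X → ℂ) : Prop where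
  map_add : ∀ {e : S} {a b : A}, IsIdempotentElem e → a ∈ 𝓑.fib e → b ∈ 𝓑.fib e →
    ∀ x, val (a + b) x = val a x + val b x
  map_mul : ∀ {e f : S} {a b : A}, IsIdempotentElem e → IsIdempotentElem f →
    a ∈ 𝓑.fib e → b ∈ 𝓑.fib f → ∀ x, val (a * b) x = val a x * val b x
  map_star : ∀ {e : S} {a : A}, IsIdempotentElem e → a ∈ 𝓑.fib e →
    ∀ x, val (star a) x = starRingEnd ℂ (val a x)
  injective : ∀ x y : X,
    (∀ (e : S) (b : A), IsIdempotentElem e → b ∈ 𝓑.fib e → val b x = val b y) → x = y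

def IsThetaFamily (𝓑 : FellBundle S A) (val : A → X → ℂ) (θ : A → X → X) : Prop :=
  ∀ {s : S} {a : A}, a ∈ 𝓑.fib s → ∀ x, 0 < (val (star a * a) x).re →
    ∀ {e : S} {b : A}, IsIdempotentElem e → b ∈ 𝓑.fib e →
      val (star a * b * a) x = val (star a * a) x * val b (θ a x)

namespace IsCharacterFamily

variable {𝓑 : FellBundle S A} {val : A → X → ℂ}

theorem conj_val_star (hval : 𝓑.IsCharacterFamily val) {e : S} {a : A}
    (he : IsIdempotentElem e) (ha : a ∈ 𝓑.fib e) (x : X) :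
    starRingEnd ℂ (val (star a) x) = val a x := by
  rw [hval.map_star he ha, Complex.conj_conj]

theorem conj_val_star_mul (hval : 𝓑.IsCharacterFamily val) {s : S} {a a' : A}
    (ha : a ∈ 𝓑.fib s) (ha' : a' ∈ 𝓑.fib s) (x : X) :
    starRingEnd ℂ (val (star a * a') x) = val (star a' * a) x := by
  rw [← hval.conj_val_star (isIdempotentElem_star_mul_self s)
    (𝓑.mul_mem (𝓑.star_mem ha') ha), star_mul, star_star]

theorem val_star_mul_mul_eq (hval : 𝓑.IsCharacterFamily val) {θ : A → X → X}
    (hθ : 𝓑.IsThetaFamily val θ) {s e : S} {a a' b : A} (ha : a ∈ 𝓑.fib s)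
    (ha' : a' ∈ 𝓑.fib s) (he : IsIdempotentElem e) (hb : b ∈ 𝓑.fib e) {x : X}
    (hx : 0 < (val (star a * a) x).re) (hu : val (star a' * a) x ≠ 0) :
    val (star a * b * a') x = val (star a * a') x * val b (θ a x) := by
  have hs := isIdempotentElem_star_mul_self s
  have hs' := isIdempotentElem_mul_star_self s
  have ha'a : star a' * a ∈ 𝓑.fib (star s * s) := 𝓑.mul_mem (𝓑.star_mem ha') ha
  have haa' : star a * a' ∈ 𝓑.fib (star s * s) := 𝓑.mul_mem (𝓑.star_mem ha) ha'
  have ha'a' : a' * star a' ∈ 𝓑.fib (s * star s) := 𝓑.mul_mem ha' (𝓑.star_mem ha')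
  refine mul_right_cancel₀ hu ?_
  calc val (star a * b * a') x * val (star a' * a) x
      = val (star a * (b * (a' * star a')) * a) x := by
        rw [← hval.map_mul (isIdempotentElem_star_mul_mul s he) hs
          (𝓑.mul_mem (𝓑.mul_mem (𝓑.star_mem ha) hb) ha') ha'a]
        simp only [mul_assoc]
    _ = val (star a * (a' * star a') * a) x * val b (θ a x) := by
        rw [hθ ha x hx (isIdempotentElem_mul he hs') (𝓑.mul_mem hb ha'a'),
          hval.map_mul he hs' hb ha'a', hθ ha x hx hs' ha'a']
        ring
    _ = val (star a * a') x * val b (θ a x) * val (star a' * a) x := by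
        rw [mul_right_comm, ← hval.map_mul hs hs haa' ha'a]
        simp only [mul_assoc]

theorem theta_eq_of_val_star_mul_ne_zero (hval : 𝓑.IsCharacterFamily val)
    {θ : A → X → X} (hθ : 𝓑.IsThetaFamily val θ) {s : S} {a a' : A} (ha : a ∈ 𝓑.fib s)
    (ha' : a' ∈ 𝓑.fib s) {x : X} (hx : 0 < (val (star a * a) x).re)
    (hx' : 0 < (val (star a' * a') x).re) (hu : val (star a' * a) x ≠ 0) :
    θ a x = θ a' x := by
  have hu' : val (star a * a') x ≠ 0 := by
    rwa [← hval.conj_val_star_mul ha' ha, map_ne_zero]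
  refine hval.injective _ _ fun e b he hb => mul_left_cancel₀ hu' ?_
  have hb' : star b ∈ 𝓑.fib e := star_eq_of_isIdempotentElem he ▸ 𝓑.star_mem hb
  calc val (star a * a') x * val b (θ a x)
      = val (star a * b * a') x := (hval.val_star_mul_mul_eq hθ ha ha' he hb hx hu).symm
    _ = starRingEnd ℂ (val (star a' * star b * a) x) := by
        rw [← hval.conj_val_star (isIdempotentElem_star_mul_mul s he)
          (𝓑.mul_mem (𝓑.mul_mem (𝓑.star_mem ha) hb) ha')]
        simp only [star_mul, star_star, mul_assoc]
    _ = val (star a * a') x * val b (θ a' x) := by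
        rw [hval.val_star_mul_mul_eq hθ ha' ha he hb' hx' hu', _root_.map_mul,
          hval.conj_val_star he hb, hval.conj_val_star_mul ha' ha]

theorem val_star_add_mul (hval : 𝓑.IsCharacterFamily val) {s : S} {a₁ a₂ b : A}
    (h₁ : a₁ ∈ 𝓑.fib s) (h₂ : a₂ ∈ 𝓑.fib s) (hb : b ∈ 𝓑.fib s) (x : X) :
    val (star (a₁ + a₂) * b) x = val (star a₁ * b) x + val (star a₂ * b) x := by
  rw [star_add, add_mul, hval.map_add (isIdempotentElem_star_mul_self s)
    (𝓑.mul_mem (𝓑.star_mem h₁) hb) (𝓑.mul_mem (𝓑.star_mem h₂) hb)]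

theorem val_star_mul_add (hval : 𝓑.IsCharacterFamily val) {s : S} {a b₁ b₂ : A}
    (ha : a ∈ 𝓑.fib s) (h₁ : b₁ ∈ 𝓑.fib s) (h₂ : b₂ ∈ 𝓑.fib s) (x : X) :
    val (star a * (b₁ + b₂)) x = val (star a * b₁) x + val (star a * b₂) x := by
  rw [mul_add, hval.map_add (isIdempotentElem_star_mul_self s)
    (𝓑.mul_mem (𝓑.star_mem ha) h₁) (𝓑.mul_mem (𝓑.star_mem ha) h₂)]

theorem theta_eq_of_val_star_mul_eq_zero (hval : 𝓑.IsCharacterFamily val)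
    {θ : A → X → X} (hθ : 𝓑.IsThetaFamily val θ) {s : S} {a₁ a₂ : A} (h₁ : a₁ ∈ 𝓑.fib s)
    (h₂ : a₂ ∈ 𝓑.fib s) {x : X} (hx₁ : 0 < (val (star a₁ * a₁) x).re)
    (hx₂ : 0 < (val (star a₂ * a₂) x).re) (hu : val (star a₂ * a₁) x = 0) :
    θ a₁ x = θ a₂ x := by
  have h : a₁ + a₂ ∈ 𝓑.fib s := add_mem h₁ h₂
  have hu' : val (star a₁ * a₂) x = 0 := by
    rw [← hval.conj_val_star_mul h₂ h₁, hu, map_zero]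
  have hc₁ : val (star (a₁ + a₂) * a₁) x = val (star a₁ * a₁) x := by
    rw [hval.val_star_add_mul h₁ h₂ h₁, hu, add_zero]
  have hc₂ : val (star (a₁ + a₂) * a₂) x = val (star a₂ * a₂) x := by
    rw [hval.val_star_add_mul h₁ h₂ h₂, hu', zero_add]
  have hx : 0 < (val (star (a₁ + a₂) * (a₁ + a₂)) x).re := by
    rw [hval.val_star_mul_add h h₁ h₂, hc₁, hc₂, Complex.add_re]
    exact add_pos hx₁ hx₂
  rw [hval.theta_eq_of_val_star_mul_ne_zero hθ h₁ h hx₁ hx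
      (hc₁ ▸ Complex.ne_zero_of_re_pos hx₁),
    hval.theta_eq_of_val_star_mul_ne_zero hθ h₂ h hx₂ hx (hc₂ ▸ Complex.ne_zero_of_re_pos hx₂)]

end IsCharacterFamily

end FellBundle

theorem stmt_7_general (𝓑 : FellBundle S A)
    {X : Type*} (val : A → X → ℂ)
    (hval_add : ∀ {e : S} {a b : A}, e * e = e → a ∈ 𝓑.fib e → b ∈ 𝓑.fib e →
      ∀ x, val (a + b) x = val a x + val b x)
    (hval_mul : ∀ {e f : S} {a b : A}, e * e = e → f * f = f → a ∈ 𝓑.fib e → b ∈ 𝓑.fib f →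
      ∀ x, val (a * b) x = val a x * val b x)
    (hval_star : ∀ {e : S} {a : A}, e * e = e → a ∈ 𝓑.fib e →
      ∀ x, val (star a) x = (starRingEnd ℂ) (val a x))
    (hval_sep : ∀ x y : X,
      (∀ (e : S) (b : A), e * e = e → b ∈ 𝓑.fib e → val b x = val b y) → x = y)
    (θa : A → X → X)
    (hθa : ∀ {s : S} {a : A}, a ∈ 𝓑.fib s → ∀ x : X, 0 < (val (star a * a) x).re →
      ∀ {e : S} {b : A}, e * e = e → b ∈ 𝓑.fib e →
        val (star a * b * a) x = val (star a * a) x * val b (θa a x))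
    {s : S} {a₁ a₂ : A} (h₁ : a₁ ∈ 𝓑.fib s) (h₂ : a₂ ∈ 𝓑.fib s)
    {x : X} (hx₁ : 0 < (val (star a₁ * a₁) x).re) (hx₂ : 0 < (val (star a₂ * a₂) x).re) :
    θa a₁ x = θa a₂ x := by
  have hval : 𝓑.IsCharacterFamily val := ⟨hval_add, hval_mul, hval_star, hval_sep⟩
  by_cases hu : val (star a₂ * a₁) x = 0
  · exact hval.theta_eq_of_val_star_mul_eq_zero hθa h₁ h₂ hx₁ hx₂ hu
  · exact hval.theta_eq_of_val_star_mul_ne_zero hθa h₁ h₂ hx₁ hx₂ hu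

/-- Let `𝓑` be a saturated semi-abelian Fell bundle over `S`, with
`C*(𝓔) ≅ C₀(X)` (the identification is given by the Gelfand transform `val`, which on the
idempotent part is linear, multiplicative, star-preserving, injective and separates the
points of the spectrum `X`).  For `a ∈ 𝒜ₛ` let `θₐ` be the map on
`dom a = {x : (a*a)(x) > 0}` determined by `(a* b a)(x) = (a*a)(x) · b(θₐ x)` for all
`b ∈ C₀(X)`.  If `a₁, a₂ ∈ 𝒜ₛ` and `x ∈ dom a₁ ∩ dom a₂`, then `θ_{a₁} x = θ_{a₂} x`. -/
theorem stmt_7 (𝓑 : FellBundle S A) (hsat : 𝓑.Saturated) (hsab : 𝓑.SemiAbelian)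
    {X : Type*} (val : A → X → ℂ)
    (hval_add : ∀ {e : S} {a b : A}, e * e = e → a ∈ 𝓑.fib e → b ∈ 𝓑.fib e →
      ∀ x, val (a + b) x = val a x + val b x)
    (hval_smul : ∀ {e : S} {a : A} (c : ℂ), e * e = e → a ∈ 𝓑.fib e →
      ∀ x, val (c • a) x = c * val a x)
    (hval_mul : ∀ {e f : S} {a b : A}, e * e = e → f * f = f → a ∈ 𝓑.fib e → b ∈ 𝓑.fib f →
      ∀ x, val (a * b) x = val a x * val b x)
    (hval_star : ∀ {e : S} {a : A}, e * e = e → a ∈ 𝓑.fib e →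
      ∀ x, val (star a) x = (starRingEnd ℂ) (val a x))
    (hval_inj : ∀ {e : S} {a b : A}, e * e = e → a ∈ 𝓑.fib e → b ∈ 𝓑.fib e →
      (∀ x, val a x = val b x) → a = b)
    (hval_sep : ∀ x y : X,
      (∀ (e : S) (b : A), e * e = e → b ∈ 𝓑.fib e → val b x = val b y) → x = y)
    (hval_pos : ∀ {s : S} {a : A}, a ∈ 𝓑.fib s →
      ∀ x, (val (star a * a) x).im = 0 ∧ 0 ≤ (val (star a * a) x).re)
    (θa : A → X → X)
    (hθa : ∀ {s : S} {a : A}, a ∈ 𝓑.fib s → ∀ x : X, 0 < (val (star a * a) x).re →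
      ∀ {e : S} {b : A}, e * e = e → b ∈ 𝓑.fib e →
        val (star a * b * a) x = val (star a * a) x * val b (θa a x))
    {s : S} {a₁ a₂ : A} (h₁ : a₁ ∈ 𝓑.fib s) (h₂ : a₂ ∈ 𝓑.fib s)
    {x : X} (hx₁ : 0 < (val (star a₁ * a₁) x).re) (hx₂ : 0 < (val (star a₂ * a₂) x).re) :
    θa a₁ x = θa a₂ x :=
  stmt_7_general 𝓑 val hval_add hval_mul hval_star hval_sep θa hθa h₁ h₂ hx₁ hx₂
end

section
/- In a saturated semi-abelian Fell bundle $\A$ over an inverse semigroup $S$, for every $s\in S$ and all $a,b,c\in\A_s$ one has $ab^*c=cb^*a$; consequently, for $a\in\A_s$ and $d\in\A_{s^*s}$ one has $ad=\tilde\theta_s(d)a$, where $\tilde\theta_s(d)=d\circ\theta_s^{-1}$ is the induced isomorphism $C_0(\U_{s^*s})\to C_0(\U_{ss^*})$. -/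
variable {S : Type*} [InverseSemigroup S]
variable {A : Type*} [NormedRing A] [StarRing A] [CStarRing A]
  [NormedAlgebra ℂ A] [StarModule ℂ A] [CompleteSpace A]

namespace FellBundle

variable {B : Type*} [NormedRing B] [StarRing B] [NormedAlgebra ℂ B] (𝓑 : FellBundle S B)
  {s : S}

theorem star_mul_mem {b c : B} (hb : b ∈ 𝓑.fib s) (hc : c ∈ 𝓑.fib s) :
    star b * c ∈ 𝓑.fib (star s * s) :=
  𝓑.mul_mem (𝓑.star_mem hb) hc

theorem mul_star_mem {b c : B} (hb : b ∈ 𝓑.fib s) (hc : c ∈ 𝓑.fib s) :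
    b * star c ∈ 𝓑.fib (s * star s) :=
  𝓑.mul_mem hb (𝓑.star_mem hc)

theorem mul_mem_of_mem_star_mul {a d : B} (ha : a ∈ 𝓑.fib s) (hd : d ∈ 𝓑.fib (star s * s)) :
    a * d ∈ 𝓑.fib s := by
  simpa only [← mul_assoc, InverseSemigroup.mul_star_mul] using 𝓑.mul_mem ha hd

theorem mul_mem_of_mem_mul_star {a d : B} (hd : d ∈ 𝓑.fib (s * star s)) (ha : a ∈ 𝓑.fib s) :
    d * a ∈ 𝓑.fib s := by
  simpa only [InverseSemigroup.mul_star_mul] using 𝓑.mul_mem hd ha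

theorem mul_star_mul_mem {a b c : B} (ha : a ∈ 𝓑.fib s) (hb : b ∈ 𝓑.fib s)
    (hc : c ∈ 𝓑.fib s) : a * star b * c ∈ 𝓑.fib s :=
  𝓑.mul_mem_of_mem_mul_star (𝓑.mul_star_mem ha hb) hc

/-- Evaluation at `x ∈ 𝒰_{s*s}` and at `θₛ x` form such a pair. -/
structure IsCharacterPair (s : S) (φ ψ : B → ℂ) : Prop where
  map_mul_left : ∀ {u v : B}, u ∈ 𝓑.fib (star s * s) → v ∈ 𝓑.fib (star s * s) →
    φ (u * v) = φ u * φ v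
  map_mul_right : ∀ {u v : B}, u ∈ 𝓑.fib (s * star s) → v ∈ 𝓑.fib (s * star s) →
    ψ (u * v) = ψ u * ψ v
  map_star_mul : ∀ {b c : B}, b ∈ 𝓑.fib s → c ∈ 𝓑.fib s → φ (star b * c) = ψ (c * star b)

namespace IsCharacterPair

variable {𝓑} {φ ψ : B → ℂ}

theorem map_star_mul_mul_map_star_mul (hφψ : 𝓑.IsCharacterPair s φ ψ) {p q u v : B}
    (hp : p ∈ 𝓑.fib s) (hq : q ∈ 𝓑.fib s) (hu : u ∈ 𝓑.fib s) (hv : v ∈ 𝓑.fib s) :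
    φ (star p * q) * φ (star u * v) = φ (star p * v) * φ (star u * q) :=
  calc φ (star p * q) * φ (star u * v) = φ (star p * (q * star u * v)) := by
        rw [← hφψ.map_mul_left (𝓑.star_mul_mem hp hq) (𝓑.star_mul_mem hu hv)]
        simp only [mul_assoc]
    _ = ψ (q * star u) * ψ (v * star p) := by
        rw [hφψ.map_star_mul hp (𝓑.mul_star_mul_mem hq hu hv), mul_assoc,
          hφψ.map_mul_right (𝓑.mul_star_mem hq hu) (𝓑.mul_star_mem hv hp)]
    _ = φ (star p * v) * φ (star u * q) := by
        rw [hφψ.map_star_mul hp hv, hφψ.map_star_mul hu hq, mul_comm]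

theorem map_star_mul_mul_star_mul_comm (hφψ : 𝓑.IsCharacterPair s φ ψ) {a b c w : B}
    (ha : a ∈ 𝓑.fib s) (hb : b ∈ 𝓑.fib s) (hc : c ∈ 𝓑.fib s) (hw : w ∈ 𝓑.fib s) :
    φ (star w * (a * star b * c)) = φ (star w * (c * star b * a)) :=
  calc φ (star w * (a * star b * c)) = φ (star w * a) * φ (star b * c) := by
        rw [← hφψ.map_mul_left (𝓑.star_mul_mem hw ha) (𝓑.star_mul_mem hb hc)]
        simp only [mul_assoc]
    _ = φ (star w * c) * φ (star b * a) := hφψ.map_star_mul_mul_map_star_mul hw ha hb hc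
    _ = φ (star w * (c * star b * a)) := by
        rw [← hφψ.map_mul_left (𝓑.star_mul_mem hw hc) (𝓑.star_mul_mem hb ha)]
        simp only [mul_assoc]

theorem map_star_mul_mul_eq_map_star_mul_mul (hφψ : 𝓑.IsCharacterPair s φ ψ) {a d d' w : B}
    (ha : a ∈ 𝓑.fib s) (hd : d ∈ 𝓑.fib (star s * s)) (hd' : d' ∈ 𝓑.fib (s * star s))
    (hw : w ∈ 𝓑.fib s) (hdd' : ψ d' = φ d) :
    φ (star w * (a * d)) = φ (star w * (d' * a)) :=
  calc φ (star w * (a * d)) = φ (star w * a) * φ d := by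
        rw [← mul_assoc, hφψ.map_mul_left (𝓑.star_mul_mem hw ha) hd]
    _ = ψ d' * ψ (a * star w) := by rw [hφψ.map_star_mul hw ha, hdd', mul_comm]
    _ = φ (star w * (d' * a)) := by
        rw [← hφψ.map_mul_right hd' (𝓑.mul_star_mem ha hw), ← mul_assoc,
          hφψ.map_star_mul hw (𝓑.mul_mem_of_mem_mul_star hd' ha)]

end IsCharacterPair

theorem eq_of_forall_val_star_mul_eq [CStarRing B] {X : Type*} (val : B → X → ℂ)
    (hadd : ∀ {u v : B}, u ∈ 𝓑.fib (star s * s) → v ∈ 𝓑.fib (star s * s) →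
      ∀ x, val (u + v) x = val u x + val v x)
    (hsmul : ∀ {u : B} (c : ℂ), u ∈ 𝓑.fib (star s * s) → ∀ x, val (c • u) x = c * val u x)
    (hinj : ∀ {u v : B}, u ∈ 𝓑.fib (star s * s) → v ∈ 𝓑.fib (star s * s) →
      (∀ x, val u x = val v x) → u = v)
    {u v : B} (hu : u ∈ 𝓑.fib s) (hv : v ∈ 𝓑.fib s)
    (h : ∀ x ∈ 𝓑.U val (star s * s), ∀ w ∈ 𝓑.fib s, val (star w * u) x = val (star w * v) x) :
    u = v := by
  have hsub : ∀ {p q : B}, p ∈ 𝓑.fib (star s * s) → q ∈ 𝓑.fib (star s * s) →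
      ∀ x, val (p - q) x = val p x - val q x := by
    intro p q hp hq x
    rw [sub_eq_add_neg, ← neg_one_smul ℂ q, hadd hp (Submodule.smul_mem _ _ hq), hsmul _ hq]
    ring
  have hz : u - v ∈ 𝓑.fib s := sub_mem hu hv
  have hzz : star (u - v) * (u - v) ∈ 𝓑.fib (star s * s) := 𝓑.star_mul_mem hz hz
  have hvanish : ∀ x, val (star (u - v) * (u - v)) x = val 0 x := by
    intro x
    have hzero : val 0 x = 0 := by simpa using hsub (zero_mem _) (zero_mem _) x
    rw [hzero]
    by_cases hx : x ∈ 𝓑.U val (star s * s)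
    · rw [mul_sub, hsub (𝓑.star_mul_mem hz hu) (𝓑.star_mul_mem hz hv), h x hx _ hz, sub_self]
    · exact by_contra fun hne => hx ⟨_, hzz, hne⟩
  rw [← sub_eq_zero, ← CStarRing.star_mul_self_eq_zero_iff]
  exact hinj hzz (zero_mem _) hvanish

end FellBundle

theorem stmt_12_general (𝓑 : FellBundle S A)
    {X : Type*} (val : A → X → ℂ)
    (hval_add : ∀ {e : S} {a b : A}, e * e = e → a ∈ 𝓑.fib e → b ∈ 𝓑.fib e →
      ∀ x, val (a + b) x = val a x + val b x)
    (hval_smul : ∀ {e : S} {a : A} (c : ℂ), e * e = e → a ∈ 𝓑.fib e →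
      ∀ x, val (c • a) x = c * val a x)
    (hval_mul : ∀ {e f : S} {a b : A}, e * e = e → f * f = f → a ∈ 𝓑.fib e → b ∈ 𝓑.fib f →
      ∀ x, val (a * b) x = val a x * val b x)
    (hval_inj : ∀ {e : S} {a b : A}, e * e = e → a ∈ 𝓑.fib e → b ∈ 𝓑.fib e →
      (∀ x, val a x = val b x) → a = b)
    (θ : S → X → X)
    -- the identity `(b* c)(x) = (c b*)(θₛ x)` for `b, c ∈ 𝒜ₛ` and `x ∈ 𝒰_{s*s}`:
    (hθ_pair : ∀ {s : S} {b c : A}, b ∈ 𝓑.fib s → c ∈ 𝓑.fib s →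
      ∀ x ∈ 𝓑.U val (star s * s), val (star b * c) x = val (c * star b) (θ s x))
    {s : S} {a : A} (ha : a ∈ 𝓑.fib s) :
    (∀ b c : A, b ∈ 𝓑.fib s → c ∈ 𝓑.fib s → a * star b * c = c * star b * a) ∧
    (∀ d d' : A, d ∈ 𝓑.fib (star s * s) → d' ∈ 𝓑.fib (s * star s) →
      (∀ x ∈ 𝓑.U val (star s * s), val d' (θ s x) = val d x) → a * d = d' * a) := by
  have he := InverseSemigroup.isIdempotentElem_star_mul_self s
  have he' := InverseSemigroup.isIdempotentElem_mul_star_self s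
  have hchar : ∀ x ∈ 𝓑.U val (star s * s), 𝓑.IsCharacterPair s (val · x) (val · (θ s x)) :=
    fun x hx => ⟨fun hu hv => hval_mul he he hu hv x, fun hu hv => hval_mul he' he' hu hv _,
      fun hb hc => hθ_pair hb hc x hx⟩
  have hsep {u v : A} : u ∈ 𝓑.fib s → v ∈ 𝓑.fib s → _ → u = v :=
    𝓑.eq_of_forall_val_star_mul_eq val (fun hu hv => hval_add he hu hv)
      (fun c hu => hval_smul c he hu) (fun hu hv => hval_inj he hu hv)
  refine ⟨fun b c hb hc => ?_, fun d d' hd hd' hdd' => ?_⟩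
  · exact hsep (𝓑.mul_star_mul_mem ha hb hc) (𝓑.mul_star_mul_mem hc hb ha)
      fun x hx w hw => (hchar x hx).map_star_mul_mul_star_mul_comm ha hb hc hw
  · exact hsep (𝓑.mul_mem_of_mem_star_mul ha hd) (𝓑.mul_mem_of_mem_mul_star hd' ha)
      fun x hx w hw => (hchar x hx).map_star_mul_mul_eq_map_star_mul_mul ha hd hd' hw (hdd' x hx)

/-- In a saturated semi-abelian Fell bundle `𝓑` over an inverse
semigroup `S`, for every `s ∈ S` and all `a, b, c ∈ 𝒜ₛ` one has `a b* c = c b* a`;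
consequently, for `a ∈ 𝒜ₛ` and `d ∈ 𝒜_{s*s}` one has `a d = θ̃ₛ(d) a`, where
`θ̃ₛ(d) = d ∘ θₛ⁻¹` is the induced isomorphism `C₀(𝒰_{s*s}) → C₀(𝒰_{ss*})`
(characterized by `θ̃ₛ(d)(θₛ x) = d(x)` on `𝒰_{s*s}`). -/
theorem stmt_12 (𝓑 : FellBundle S A) (hsat : 𝓑.Saturated) (hsab : 𝓑.SemiAbelian)
    {X : Type*} (val : A → X → ℂ)
    (hval_add : ∀ {e : S} {a b : A}, e * e = e → a ∈ 𝓑.fib e → b ∈ 𝓑.fib e →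
      ∀ x, val (a + b) x = val a x + val b x)
    (hval_smul : ∀ {e : S} {a : A} (c : ℂ), e * e = e → a ∈ 𝓑.fib e →
      ∀ x, val (c • a) x = c * val a x)
    (hval_mul : ∀ {e f : S} {a b : A}, e * e = e → f * f = f → a ∈ 𝓑.fib e → b ∈ 𝓑.fib f →
      ∀ x, val (a * b) x = val a x * val b x)
    (hval_star : ∀ {e : S} {a : A}, e * e = e → a ∈ 𝓑.fib e →
      ∀ x, val (star a) x = (starRingEnd ℂ) (val a x))
    (hval_inj : ∀ {e : S} {a b : A}, e * e = e → a ∈ 𝓑.fib e → b ∈ 𝓑.fib e →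
      (∀ x, val a x = val b x) → a = b)
    (hval_sep : ∀ x y : X,
      (∀ (e : S) (b : A), e * e = e → b ∈ 𝓑.fib e → val b x = val b y) → x = y)
    (hval_pos : ∀ {s : S} {a : A}, a ∈ 𝓑.fib s →
      ∀ x, (val (star a * a) x).im = 0 ∧ 0 ≤ (val (star a * a) x).re)
    (θ : S → X → X)
    (hθ : ∀ {s : S} {a : A}, a ∈ 𝓑.fib s → ∀ x : X, 0 < (val (star a * a) x).re →
      ∀ {e : S} {b : A}, e * e = e → b ∈ 𝓑.fib e →
        val (star a * b * a) x = val (star a * a) x * val b (θ s x))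
    (hθ_val : ∀ {s : S} {a : A}, a ∈ 𝓑.fib s → ∀ x ∈ 𝓑.U val (star s * s),
      val (a * star a) (θ s x) = val (star a * a) x)
    (hθ_maps : ∀ s : S, Set.MapsTo (θ s) (𝓑.U val (star s * s)) (𝓑.U val (s * star s)))
    (hθ_comp : ∀ s t : S, ∀ x ∈ 𝓑.U val (star (s * t) * (s * t)), θ s (θ t x) = θ (s * t) x)
    -- the identity `(b* c)(x) = (c b*)(θₛ x)` for `b, c ∈ 𝒜ₛ` and `x ∈ 𝒰_{s*s}`:
    (hθ_pair : ∀ {s : S} {b c : A}, b ∈ 𝓑.fib s → c ∈ 𝓑.fib s →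
      ∀ x ∈ 𝓑.U val (star s * s), val (star b * c) x = val (c * star b) (θ s x))
    {s : S} {a : A} (ha : a ∈ 𝓑.fib s) :
    (∀ b c : A, b ∈ 𝓑.fib s → c ∈ 𝓑.fib s → a * star b * c = c * star b * a) ∧
    (∀ d d' : A, d ∈ 𝓑.fib (star s * s) → d' ∈ 𝓑.fib (s * star s) →
      (∀ x ∈ 𝓑.U val (star s * s), val d' (θ s x) = val d x) → a * d = d' * a) :=
  stmt_12_general 𝓑 val hval_add hval_smul hval_mul hval_inj θ hθ_pair ha
end
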